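/- arXiv:2008.01605 — 4 statements merged into one kernel-verified Lean document; each statement's English description precedes it below -/
import Mathlib

section
/- Let $W$ be a random variable with $W \in [0,b]$ almost surely and $\mathbb{E} W \le a$, and let $\vartheta \in (0, (2b)^{-1}]$. Then both $\mathbb{E}\, e^{\vartheta(W - \mathbb{E}W)} \le e^{\vartheta^2 ab}$ and $\mathbb{E}\, e^{-\vartheta(W - \mathbb{E}W)} \le e^{\vartheta^2 ab}$. -/
open scoped BigOperators

lemma exp_le_quadratic {x : ℝ} (hx : |x| ≤ 1/2) : Real.exp x ≤ 1 + x + x ^ 2 := by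
  have h1 : |x| ≤ 1 := hx.trans (by norm_num)
  have := Real.exp_bound h1 (n := 3) (by norm_num)
  have hsum : ∑ i ∈ Finset.range 3, x ^ i / (Nat.factorial i : ℝ) = 1 + x + x ^ 2 / 2 := by
    simp [Finset.sum_range_succ, Nat.factorial]
  rw [hsum] at this
  have h2 : Real.exp x - (1 + x + x ^ 2 / 2) ≤ |x| ^ 3 * (4 / (6 * 3)) := by
    calc Real.exp x - (1 + x + x ^ 2 / 2) ≤ |Real.exp x - (1 + x + x ^ 2 / 2)| := le_abs_self _
    _ ≤ |x| ^ 3 * ((3 : ℕ).succ / ((Nat.factorial 3 : ℝ) * 3)) := this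
    _ = |x| ^ 3 * (4 / (6 * 3)) := by norm_num [Nat.factorial]
  have h3 : |x| ^ 3 ≤ |x| ^ 2 * (1/2) := by
    calc |x| ^ 3 = |x| ^ 2 * |x| := by ring
    _ ≤ |x| ^ 2 * (1/2) := by
        apply mul_le_mul_of_nonneg_left hx (by positivity)
  have h4 : |x| ^ 2 = x ^ 2 := sq_abs x
  nlinarith [sq_nonneg x]

lemma key_lemma {Ω : Type*} [Fintype Ω] (w : Ω → ℝ)
    (hw0 : ∀ ω, 0 ≤ w ω) (hw1 : ∑ ω, w ω = 1)
    (W : Ω → ℝ) (a b : ℝ) (ha : 0 < a) (hb : 0 < b)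
    (hW0 : ∀ ω, 0 ≤ W ω) (hWb : ∀ ω, W ω ≤ b)
    (hEW : ∑ ω, w ω * W ω ≤ a)
    (ϑ : ℝ) (hϑ0 : 0 < ϑ) (hϑ : ϑ ≤ (2 * b)⁻¹)
    (c : ℝ) (hc : |c| ≤ ϑ) :
    (∑ ω, w ω * Real.exp (c * (W ω - ∑ ω', w ω' * W ω'))) ≤ Real.exp (ϑ ^ 2 * a * b) := by
  set μ := ∑ ω', w ω' * W ω' with hμ
  have hμ0 : 0 ≤ μ := Finset.sum_nonneg fun ω _ => mul_nonneg (hw0 ω) (hW0 ω)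
  have hμb : μ ≤ b := by
    calc μ ≤ ∑ ω, w ω * b := Finset.sum_le_sum fun ω _ =>
          mul_le_mul_of_nonneg_left (hWb ω) (hw0 ω)
    _ = b := by rw [← Finset.sum_mul, hw1, one_mul]
  -- pointwise bound on the exponent
  have hpt : ∀ ω, Real.exp (c * (W ω - μ)) ≤
      1 + c * (W ω - μ) + c ^ 2 * (W ω - μ) ^ 2 := by
    intro ω
    have habs : |c * (W ω - μ)| ≤ 1/2 := by
      have h1 : |W ω - μ| ≤ b := by
        rw [abs_le]
        constructor <;> nlinarith [hW0 ω, hWb ω]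
      have h2 : |c * (W ω - μ)| = |c| * |W ω - μ| := abs_mul _ _
      have hϑb : ϑ * b ≤ 1/2 := by
        rw [le_div_iff₀ (by norm_num)]
        calc ϑ * b * 2 = ϑ * (2 * b) := by ring
        _ ≤ (2 * b)⁻¹ * (2 * b) := by
            apply mul_le_mul_of_nonneg_right hϑ (by positivity)
        _ = 1 := by field_simp
      calc |c * (W ω - μ)| = |c| * |W ω - μ| := h2
      _ ≤ ϑ * b := mul_le_mul hc h1 (abs_nonneg _) hϑ0.le
      _ ≤ 1/2 := hϑb
    have := exp_le_quadratic habs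
    calc Real.exp (c * (W ω - μ)) ≤ 1 + c * (W ω - μ) + (c * (W ω - μ)) ^ 2 := this
    _ = 1 + c * (W ω - μ) + c ^ 2 * (W ω - μ) ^ 2 := by ring
  -- sum the bound
  have hsum : (∑ ω, w ω * Real.exp (c * (W ω - μ))) ≤
      ∑ ω, w ω * (1 + c * (W ω - μ) + c ^ 2 * (W ω - μ) ^ 2) :=
    Finset.sum_le_sum fun ω _ => mul_le_mul_of_nonneg_left (hpt ω) (hw0 ω)
  -- compute / bound the RHS
  have hcross : ∑ ω, w ω * (c * (W ω - μ)) = 0 := by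
    have : ∀ ω, w ω * (c * (W ω - μ)) = c * (w ω * W ω) - (c * μ) * w ω := by
      intro ω; ring
    simp_rw [this, Finset.sum_sub_distrib, ← Finset.mul_sum, hw1, ← hμ]
    ring
  have hvar : ∑ ω, w ω * (W ω - μ) ^ 2 ≤ a * b := by
    have expand : ∑ ω, w ω * (W ω - μ) ^ 2 =
        (∑ ω, w ω * W ω ^ 2) - μ ^ 2 := by
      have : ∀ ω, w ω * (W ω - μ) ^ 2 =
          w ω * W ω ^ 2 - (2 * μ) * (w ω * W ω) + μ ^ 2 * w ω := by
        intro ω; ring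
      simp_rw [this, Finset.sum_add_distrib, Finset.sum_sub_distrib, ← Finset.mul_sum,
        hw1, ← hμ]
      ring
    have hsq : (∑ ω, w ω * W ω ^ 2) ≤ b * μ := by
      calc (∑ ω, w ω * W ω ^ 2) ≤ ∑ ω, w ω * (b * W ω) := by
            apply Finset.sum_le_sum
            intro ω _
            apply mul_le_mul_of_nonneg_left _ (hw0 ω)
            nlinarith [hW0 ω, hWb ω]
      _ = b * μ := by rw [hμ, Finset.mul_sum]; exact Finset.sum_congr rfl fun ω _ => by ring
    nlinarith [sq_nonneg μ]
  have hrhs : ∑ ω, w ω * (1 + c * (W ω - μ) + c ^ 2 * (W ω - μ) ^ 2) =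
      1 + c ^ 2 * ∑ ω, w ω * (W ω - μ) ^ 2 := by
    have : ∀ ω, w ω * (1 + c * (W ω - μ) + c ^ 2 * (W ω - μ) ^ 2) =
        w ω + w ω * (c * (W ω - μ)) + c ^ 2 * (w ω * (W ω - μ) ^ 2) := by
      intro ω; ring
    simp_rw [this, Finset.sum_add_distrib, hw1, hcross, ← Finset.mul_sum]
    ring
  have hc2 : c ^ 2 ≤ ϑ ^ 2 := by
    have := sq_abs c
    nlinarith [abs_nonneg c]
  calc (∑ ω, w ω * Real.exp (c * (W ω - μ))) ≤
      1 + c ^ 2 * ∑ ω, w ω * (W ω - μ) ^ 2 := by rw [← hrhs]; exact hsum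
  _ ≤ 1 + ϑ ^ 2 * (a * b) := by
      have hv0 : 0 ≤ ∑ ω, w ω * (W ω - μ) ^ 2 :=
        Finset.sum_nonneg fun ω _ => mul_nonneg (hw0 ω) (sq_nonneg _)
      nlinarith
  _ ≤ Real.exp (ϑ ^ 2 * a * b) := by
      have := Real.add_one_le_exp (ϑ ^ 2 * a * b)
      linarith [this]

/-- Exponential moment bound for a bounded nonnegative random variable
(Proposition 3.4 / `EeZ`). -/
theorem stmt_2 {Ω : Type*} [Fintype Ω] (w : Ω → ℝ)
    (hw0 : ∀ ω, 0 ≤ w ω) (hw1 : ∑ ω, w ω = 1)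
    (W : Ω → ℝ) (a b : ℝ) (ha : 0 < a) (hb : 0 < b)
    (hW0 : ∀ ω, 0 ≤ W ω) (hWb : ∀ ω, W ω ≤ b)
    (hEW : ∑ ω, w ω * W ω ≤ a)
    (ϑ : ℝ) (hϑ0 : 0 < ϑ) (hϑ : ϑ ≤ (2 * b)⁻¹) :
    (∑ ω, w ω * Real.exp (ϑ * (W ω - ∑ ω', w ω' * W ω'))) ≤ Real.exp (ϑ ^ 2 * a * b) ∧
    (∑ ω, w ω * Real.exp (-ϑ * (W ω - ∑ ω', w ω' * W ω'))) ≤ Real.exp (ϑ ^ 2 * a * b) := by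
  constructor
  · exact key_lemma w hw0 hw1 W a b ha hb hW0 hWb hEW ϑ hϑ0 hϑ ϑ
      (by rw [abs_of_pos hϑ0])
  · exact key_lemma w hw0 hw1 W a b ha hb hW0 hWb hEW ϑ hϑ0 hϑ (-ϑ)
      (by rw [abs_neg, abs_of_pos hϑ0])
end

section
/- Fix $N$ and regard bijections $\sigma : [N] \to [N]$ as sets of cells $(i, \sigma(i))$ in an $N \times N$ array. A pattern is a set of cells, no two in the same row or column; patterns $X, Y$ are adjacent if some row or column meets both. Let $\boldsymbol{\sigma}$ be a uniformly random bijection and for a pattern $X$ let $A_X = \{\boldsymbol{\sigma} \supseteq X\}$. If $X, X_1, \dots, X_t$ are patterns with $X$ not adjacent to any $X_i$, then $\mathbb{P}(A_X \mid \bigwedge_{i=1}^t \overline{A_{X_i}}) \le \mathbb{P}(A_X)$. -/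
open scoped Classical BigOperators

/-!
A switching argument. Every pattern extends to a permutation that fixes every point off its
rows and columns; for a permutation `π` let `h_π` be such an extension of
`{(π r, c) | (r, c) ∈ X}`, which depends only on `π` restricted to the rows of `X`.
Then `(σ, π) ↦ (h_π * π, h_π⁻¹ * σ)` injects `(A_X ∩ B) × S_N` into `A_X × B`, where `B` is the
event that no `Xᵢ` occurs: `h_π * π` contains `X`; since the `Xᵢ` avoid the lines of `X`, `h_π`
cannot create an occurrence of an `Xᵢ`; and `h_π⁻¹ * σ` agrees with `π` on the rows of `X`,
which recovers `h_π`. Hence `|A_X ∩ B| · N! ≤ |A_X| · |B|`.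
-/

namespace Pattern

open Equiv Finset

variable {α : Type*}

def IsPattern (X : Finset (α × α)) : Prop :=
  ∀ c ∈ X, ∀ c' ∈ X, c ≠ c' → c.1 ≠ c'.1 ∧ c.2 ≠ c'.2

abbrev Contains (σ : Perm α) (X : Finset (α × α)) : Prop :=
  ∀ c ∈ X, σ c.1 = c.2

lemma IsPattern.mono {X Y : Finset (α × α)} (hY : IsPattern Y) (hXY : X ⊆ Y) : IsPattern X :=
  fun c hc c' hc' => hY c (hXY hc) c' (hXY hc')

variable [DecidableEq α]

lemma IsPattern.image_prodMap {X : Finset (α × α)} (hX : IsPattern X) {f g : α → α}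
    (hf : Function.Injective f) (hg : Function.Injective g) :
    IsPattern (X.image (Prod.map f g)) := by
  simp only [IsPattern, mem_image]
  rintro _ ⟨c, hc, rfl⟩ _ ⟨c', hc', rfl⟩ hne
  have hcc' : c ≠ c' := fun h => hne (h ▸ rfl)
  exact ⟨hf.ne (hX c hc c' hc' hcc').1, hg.ne (hX c hc c' hc' hcc').2⟩

lemma IsPattern.exists_perm_contains {X : Finset (α × α)} (hX : IsPattern X) :
    ∃ g : Perm α, Contains g X ∧ ∀ x, (∀ c ∈ X, x ≠ c.1 ∧ x ≠ c.2) → g x = x := by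
  induction X using Finset.induction_on with
  | empty => exact ⟨1, by simp, fun _ _ => rfl⟩
  | @insert a X ha ih =>
    obtain ⟨g, hgX, hg_fix⟩ := ih (hX.mono (subset_insert a X))
    -- By injectivity of `g`, the transposition moves no point already placed correctly.
    refine ⟨swap (g a.1) a.2 * g, ?_, ?_⟩
    · intro c hc
      rcases mem_insert.mp hc with rfl | hcX
      · simp
      · have hca := hX c hc a (mem_insert_self a X) (by rintro rfl; exact ha hcX)
        rw [Perm.mul_apply, hgX c hcX,
          swap_apply_of_ne_of_ne (hgX c hcX ▸ g.injective.ne hca.1) hca.2]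
    · intro x hx
      have hxa := hx a (mem_insert_self a X)
      have hgx : g x = x := hg_fix x fun c hc => hx c (mem_insert_of_mem hc)
      rw [Perm.mul_apply, hgx, swap_apply_of_ne_of_ne (hgx ▸ g.injective.ne hxa.1) hxa.2]

variable {X : Finset (α × α)}

noncomputable def IsPattern.extendPerm (hX : IsPattern X) : Perm α :=
  hX.exists_perm_contains.choose

lemma IsPattern.contains_extendPerm (hX : IsPattern X) : Contains hX.extendPerm X :=
  hX.exists_perm_contains.choose_spec.1

lemma IsPattern.extendPerm_apply_of_forall_ne (hX : IsPattern X) {x : α}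
    (hx : ∀ c ∈ X, x ≠ c.1 ∧ x ≠ c.2) : hX.extendPerm x = x :=
  hX.exists_perm_contains.choose_spec.2 x hx

noncomputable def switch (hX : IsPattern X) (π : Perm α) : Perm α :=
  (hX.image_prodMap π.injective Function.injective_id).extendPerm

lemma switch_apply_apply (hX : IsPattern X) (π : Perm α) {c : α × α} (hc : c ∈ X) :
    switch hX π (π c.1) = c.2 :=
  IsPattern.contains_extendPerm _ (Prod.map π id c) (mem_image_of_mem _ hc)

lemma switch_apply_of_forall_ne (hX : IsPattern X) (π : Perm α) {x : α}
    (hx : ∀ c ∈ X, x ≠ π c.1 ∧ x ≠ c.2) : switch hX π x = x := by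
  refine IsPattern.extendPerm_apply_of_forall_ne _ fun d hd => ?_
  obtain ⟨c, hc, rfl⟩ := mem_image.mp hd
  exact hx c hc

lemma switch_congr (hX : IsPattern X) {π₁ π₂ : Perm α} (h : ∀ c ∈ X, π₁ c.1 = π₂ c.1) :
    switch hX π₁ = switch hX π₂ := by
  unfold switch
  congr 1
  exact image_congr fun c hc => Prod.ext (h c hc) rfl

lemma contains_switch_mul (hX : IsPattern X) (π : Perm α) : Contains (switch hX π * π) X :=
  fun _ hc => switch_apply_apply hX π hc

lemma switch_inv_mul_apply (hX : IsPattern X) (π : Perm α) {σ : Perm α} (hσ : Contains σ X)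
    {c : α × α} (hc : c ∈ X) : ((switch hX π)⁻¹ * σ) c.1 = π c.1 := by
  rw [Perm.mul_apply, Perm.inv_eq_iff_eq, hσ c hc, switch_apply_apply hX π hc]

lemma not_contains_switch_inv_mul (hX : IsPattern X) (π : Perm α) {σ : Perm α}
    (hσ : Contains σ X) {Y : Finset (α × α)} (hY : ¬ Contains σ Y)
    (hXY : ∀ c ∈ X, ∀ c' ∈ Y, c.1 ≠ c'.1 ∧ c.2 ≠ c'.2) :
    ¬ Contains ((switch hX π)⁻¹ * σ) Y := by
  intro hY'
  refine hY fun c' hc' => ?_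
  have hσc' : σ c'.1 = switch hX π c'.2 := by
    simpa only [Perm.mul_apply, Perm.inv_eq_iff_eq] using hY' c' hc'
  rw [hσc']
  refine switch_apply_of_forall_ne hX π fun c hc => ⟨fun hπ => ?_, (hXY c hc c' hc').2.symm⟩
  -- otherwise `σ` would send both `c'.1` and `c.1` to `c.2`
  have hσ_eq : σ c'.1 = σ c.1 := by rw [hσc', hπ, switch_apply_apply hX π hc, hσ c hc]
  exact (hXY c hc c' hc').1 (σ.injective hσ_eq).symm

theorem card_contains_and_avoids_mul_card_le [Fintype α] {ι : Type*} [Fintype ι]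
    (hX : IsPattern X) (Xs : ι → Finset (α × α))
    (hadj : ∀ i, ∀ c ∈ X, ∀ c' ∈ Xs i, c.1 ≠ c'.1 ∧ c.2 ≠ c'.2) :
    #{σ : Perm α | Contains σ X ∧ ∀ i, ¬ Contains σ (Xs i)} * Fintype.card (Perm α) ≤
      #{σ : Perm α | Contains σ X} * #{σ : Perm α | ∀ i, ¬ Contains σ (Xs i)} := by
  rw [← card_univ, ← card_product, ← card_product]
  refine card_le_card_of_injOn (fun p => (switch hX p.2 * p.2, (switch hX p.2)⁻¹ * p.1))
    ?_ ?_
  · rintro ⟨σ, π⟩ hp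
    simp only [coe_product, Set.mem_prod, mem_coe, mem_filter, mem_univ, true_and,
      and_true] at hp ⊢
    exact ⟨contains_switch_mul hX π,
      fun i => not_contains_switch_inv_mul hX π hp.1 (hp.2 i) (hadj i)⟩
  · rintro ⟨σ₁, π₁⟩ h₁ ⟨σ₂, π₂⟩ h₂ heq
    simp only [coe_product, Set.mem_prod, mem_coe, mem_filter, mem_univ, true_and,
      and_true] at h₁ h₂
    simp only [Prod.mk.injEq] at heq ⊢
    obtain ⟨hπ, hσ⟩ := heq
    have hrows : ∀ c ∈ X, π₁ c.1 = π₂ c.1 := fun c hc => by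
      rw [← switch_inv_mul_apply hX π₁ h₁.1 hc, ← switch_inv_mul_apply hX π₂ h₂.1 hc, hσ]
    rw [switch_congr hX hrows] at hπ hσ
    exact ⟨mul_left_cancel hσ, mul_left_cancel hπ⟩

end Pattern

theorem stmt_4_general (N t : ℕ) (X : Finset (Fin N × Fin N)) (Xs : Fin t → Finset (Fin N × Fin N))
    (hX : ∀ c ∈ X, ∀ c' ∈ X, c ≠ c' → c.1 ≠ c'.1 ∧ c.2 ≠ c'.2)
    (hadj : ∀ i : Fin t, ∀ c ∈ X, ∀ c' ∈ Xs i, c.1 ≠ c'.1 ∧ c.2 ≠ c'.2) :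
    ((Finset.univ.filter (fun σ : Equiv.Perm (Fin N) =>
          (∀ c ∈ X, σ c.1 = c.2) ∧ ∀ i : Fin t, ¬ (∀ c ∈ Xs i, σ c.1 = c.2))).card : ℝ) /
        ((Finset.univ.filter (fun σ : Equiv.Perm (Fin N) =>
          ∀ i : Fin t, ¬ (∀ c ∈ Xs i, σ c.1 = c.2))).card : ℝ) ≤
      ((Finset.univ.filter (fun σ : Equiv.Perm (Fin N) =>
          ∀ c ∈ X, σ c.1 = c.2)).card : ℝ) / (Fintype.card (Equiv.Perm (Fin N)) : ℝ) := by
  have hcount := Pattern.card_contains_and_avoids_mul_card_le hX Xs hadj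
  rw [le_div_iff₀ (by exact_mod_cast Fintype.card_pos), div_mul_eq_mul_div]
  -- `div_le_of_le_mul₀` needs no positive denominator (if no permutation avoids all `Xᵢ`, the
  -- left side is `0 / 0 = 0`). `simpa` instead of `exact`: the statement decides `∀ i : Fin t`
  -- with `Nat.decidableForallFin`, not the `Fintype` instance of the general lemma.
  exact div_le_of_le_mul₀ (by positivity) (by positivity)
    (by norm_cast; simpa only [Pattern.Contains] using hcount)

/-- Negative correlation for patterns in a uniform random permutation
(Proposition `ESprop`): if the pattern `X` shares no line with any of the
patterns `X₁,…,X_t`, then conditioning on avoiding all the `Xᵢ` can only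
decrease the probability of containing `X`. -/
theorem stmt_4 (N t : ℕ) (X : Finset (Fin N × Fin N)) (Xs : Fin t → Finset (Fin N × Fin N))
    (hX : ∀ c ∈ X, ∀ c' ∈ X, c ≠ c' → c.1 ≠ c'.1 ∧ c.2 ≠ c'.2)
    (hXs : ∀ i : Fin t, ∀ c ∈ Xs i, ∀ c' ∈ Xs i, c ≠ c' → c.1 ≠ c'.1 ∧ c.2 ≠ c'.2)
    (hadj : ∀ i : Fin t, ∀ c ∈ X, ∀ c' ∈ Xs i, c.1 ≠ c'.1 ∧ c.2 ≠ c'.2)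
    (hpos : 0 < (Finset.univ.filter
        (fun σ : Equiv.Perm (Fin N) => ∀ i : Fin t, ¬ (∀ c ∈ Xs i, σ c.1 = c.2))).card) :
    ((Finset.univ.filter (fun σ : Equiv.Perm (Fin N) =>
          (∀ c ∈ X, σ c.1 = c.2) ∧ ∀ i : Fin t, ¬ (∀ c ∈ Xs i, σ c.1 = c.2))).card : ℝ) /
        ((Finset.univ.filter (fun σ : Equiv.Perm (Fin N) =>
          ∀ i : Fin t, ¬ (∀ c ∈ Xs i, σ c.1 = c.2))).card : ℝ) ≤
      ((Finset.univ.filter (fun σ : Equiv.Perm (Fin N) =>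
          ∀ c ∈ X, σ c.1 = c.2)).card : ℝ) / (Fintype.card (Equiv.Perm (Fin N)) : ℝ) :=
  stmt_4_general N t X Xs hX hadj
end

section
/- Let $\zeta_1,\dots,\zeta_t$ be $\{0,1\}$-valued random variables forming a read-$k$ family: there exist independent random variables $\psi_1,\dots,\psi_s$ such that each $\zeta_j$ is a function of $(\psi_i : i \in S_j)$ for some $S_j \subseteq [s]$, and each index $i$ belongs to at most $k$ of the sets $S_j$. If $\sum_j \mathbb{E}\zeta_j \le t\rho$ then for any $\lambda \in [\rho, 1]$, $\mathbb{P}(\zeta_1 + \cdots + \zeta_t > \lambda t) < \exp[-D(\lambda \| \rho) t / k]$, where $D(\lambda\|\rho) = \lambda\log(\lambda/\rho) + (1-\lambda)\log((1-\lambda)/(1-\rho))$. -/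
/-!
Chernoff's method with the tilt `θ = log (λ/ρ) - log ((1-λ)/(1-ρ))`: by Markov's inequality the tail
probability is at most `exp (-θλt/k) · 𝔼 ∏ⱼ exp (θζⱼ/k)`. Finner's inequality, a Hölder inequality
for product measures in which every coordinate is read by at most `k` factors, bounds this
expectation by `∏ⱼ (𝔼 exp (θζⱼ))^(1/k)`. It is proved by integrating out one coordinate at a time,
applying Hölder's inequality (via weighted AM-GM) to the at most `k` factors that read it. As
`ζⱼ ∈ {0,1}`, `𝔼 exp (θζⱼ) = 1 + (exp θ - 1) 𝔼ζⱼ`, and AM-GM bounds the product of these by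
`(1 + (exp θ - 1)ρ)^t`; for this `θ` the exponent is exactly `-D(λ‖ρ) t / k`.

The inequality is strict because the tail event has positive probability only if `0 < ρ` and
`λ < 1`, and then `𝔼 ∑ⱼ ζⱼ ≤ λt` leaves a point of positive mass outside the event.
-/

open Finset Real

noncomputable def weightedLpNorm {β : Type*} [Fintype β] (q : β → ℝ) (k : ℕ) (h : β → ℝ) : ℝ :=
  (∑ b, q b * h b ^ k) ^ ((k : ℝ)⁻¹)

section WeightedLpNorm

variable {β : Type*} [Fintype β] {q : β → ℝ} {k : ℕ} {h : β → ℝ}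

lemma weightedLpNorm_nonneg (hq : ∀ b, 0 ≤ q b) (hh : ∀ b, 0 ≤ h b) :
    0 ≤ weightedLpNorm q k h :=
  rpow_nonneg (sum_nonneg fun b _ => mul_nonneg (hq b) (pow_nonneg (hh b) k)) _

lemma weightedLpNorm_pow (hk : k ≠ 0) (hq : ∀ b, 0 ≤ q b) (hh : ∀ b, 0 ≤ h b) :
    weightedLpNorm q k h ^ k = ∑ b, q b * h b ^ k :=
  rpow_inv_natCast_pow (sum_nonneg fun b _ => mul_nonneg (hq b) (pow_nonneg (hh b) k)) hk

lemma weightedLpNorm_const (hk : k ≠ 0) (hq1 : ∑ b, q b = 1) {c : ℝ} (hc : 0 ≤ c)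
    (hh : ∀ b, h b = c) : weightedLpNorm q k h = c := by
  simp only [weightedLpNorm, hh, ← sum_mul, hq1, one_mul]
  exact pow_rpow_inv_natCast hc hk

end WeightedLpNorm

theorem prod_le_one_sub_card_div_add_sum_pow_div {ι : Type*} {k : ℕ} (hk : k ≠ 0)
    {F : Finset ι} (hF : #F ≤ k) {c : ι → ℝ} (hc : ∀ j ∈ F, 0 ≤ c j) :
    ∏ j ∈ F, c j ≤ 1 - #F / k + (∑ j ∈ F, c j ^ k) / k := by
  have hkR : (0 : ℝ) < k := by positivity
  have hFk : (#F : ℝ) / k ≤ 1 := div_le_one_of_le₀ (by exact_mod_cast hF) hkR.le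
  -- weighted AM-GM on the values `c j ^ k` (weight `1/k` each) and a padding `1` (weight `1 - #F/k`)
  have amgm := geom_mean_le_arith_mean_weighted (insertNone F)
    (fun x => x.elim (1 - #F / k) fun _ => (k : ℝ)⁻¹) (fun x => x.elim 1 fun j => c j ^ k)
    (by rintro (_ | j) _ <;> simp only [Option.elim] <;> first | linarith | positivity)
    (by simp only [sum_insertNone, Option.elim, sum_const, nsmul_eq_mul]; field_simp; ring)
    (by
      rintro (_ | j) hj
      · exact zero_le_one
      · exact pow_nonneg (hc j (by simpa using hj)) k)
  simp only [prod_insertNone, sum_insertNone, Option.elim, one_rpow, one_mul, mul_one,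
    ← mul_sum] at amgm
  rw [prod_congr rfl fun j hj => pow_rpow_inv_natCast (hc j hj) hk] at amgm
  linarith [inv_mul_eq_div (k : ℝ) (∑ j ∈ F, c j ^ k)]

section Holder

variable {ι β : Type*} [Fintype β] {q : β → ℝ} {k : ℕ}

theorem sum_mul_prod_le_prod_weightedLpNorm (hk : k ≠ 0) (hq0 : ∀ b, 0 ≤ q b)
    (hq1 : ∑ b, q b = 1) {F : Finset ι} (hF : #F ≤ k) {h : ι → β → ℝ}
    (hh : ∀ j ∈ F, ∀ b, 0 ≤ h j b) :
    ∑ b, q b * ∏ j ∈ F, h j b ≤ ∏ j ∈ F, weightedLpNorm q k (h j) := by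
  set N := fun j => weightedLpNorm q k (h j)
  have hN0 : ∀ j ∈ F, 0 ≤ N j := fun j hj => weightedLpNorm_nonneg hq0 (hh j hj)
  have hNpow : ∀ j ∈ F, N j ^ k = ∑ b, q b * h j b ^ k := fun j hj =>
    weightedLpNorm_pow hk hq0 (hh j hj)
  by_cases hzero : ∃ j ∈ F, N j = 0
  · obtain ⟨j₀, hj₀, hN⟩ := hzero
    have hsum := hNpow j₀ hj₀
    rw [hN, zero_pow hk, eq_comm, sum_eq_zero_iff_of_nonneg fun b _ =>
      mul_nonneg (hq0 b) (pow_nonneg (hh j₀ hj₀ b) k)] at hsum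
    refine (sum_eq_zero fun b _ => ?_).trans_le (prod_nonneg hN0)
    rcases mul_eq_zero.mp (hsum b (mem_univ b)) with hqb | hhb
    · rw [hqb, zero_mul]
    · rw [prod_eq_zero hj₀ ((pow_eq_zero_iff hk).mp hhb), mul_zero]
  push Not at hzero
  have hNpos : ∀ j ∈ F, 0 < N j := fun j hj => (hN0 j hj).lt_of_ne' (hzero j hj)
  -- after normalising every factor to unit norm, pointwise AM-GM suffices
  have hunit : ∀ j ∈ F, ∑ b, q b * (h j b / N j) ^ k = 1 := fun j hj => by
    simp only [div_pow, mul_div_assoc', ← sum_div, ← hNpow j hj]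
    exact div_self (pow_pos (hNpos j hj) k).ne'
  have hnormalized : ∑ b, q b * ∏ j ∈ F, h j b / N j ≤ 1 := calc
    _ ≤ ∑ b, q b * (1 - #F / k + (∑ j ∈ F, (h j b / N j) ^ k) / k) := by
      gcongr with b
      · exact hq0 b
      · exact prod_le_one_sub_card_div_add_sum_pow_div hk hF fun j hj =>
          div_nonneg (hh j hj b) (hN0 j hj)
    _ = 1 - #F / k + (∑ j ∈ F, ∑ b, q b * (h j b / N j) ^ k) / k := by
      simp only [mul_add, sum_add_distrib, ← sum_mul, hq1, one_mul, mul_div_assoc', ← sum_div,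
        mul_sum]
      rw [sum_comm]
    _ = 1 := by
      rw [sum_congr rfl hunit, sum_const, nsmul_one]
      ring
  calc ∑ b, q b * ∏ j ∈ F, h j b = (∏ j ∈ F, N j) * ∑ b, q b * ∏ j ∈ F, h j b / N j := by
        rw [mul_sum]
        refine sum_congr rfl fun b _ => ?_
        rw [prod_div_distrib, mul_div_assoc', mul_div_cancel₀ _ (prod_pos hNpos).ne']
    _ ≤ ∏ j ∈ F, N j := mul_le_of_le_one_right (prod_nonneg hN0) hnormalized

theorem sum_mul_prod_le_prod_weightedLpNorm_of_const_outside (hk : k ≠ 0) (hq0 : ∀ b, 0 ≤ q b)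
    (hq1 : ∑ b, q b = 1) (F : Finset ι) (D : ι → Prop) [DecidablePred D] (hD : #(F.filter D) ≤ k)
    {h : ι → β → ℝ} (hh : ∀ j ∈ F, ∀ b, 0 ≤ h j b)
    (hconst : ∀ j ∈ F, ¬ D j → ∀ b b', h j b = h j b') :
    ∑ b, q b * ∏ j ∈ F, h j b ≤ ∏ j ∈ F, weightedLpNorm q k (h j) := by
  have hnorm : ∀ j ∈ F.filter (¬ D ·), ∀ b, h j b = weightedLpNorm q k (h j) := by
    intro j hj b
    obtain ⟨hjF, hjD⟩ := mem_filter.mp hj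
    exact (weightedLpNorm_const hk hq1 (hh j hjF b) fun b' => hconst j hjF hjD b' b).symm
  calc ∑ b, q b * ∏ j ∈ F, h j b
      = (∑ b, q b * ∏ j ∈ F.filter D, h j b) *
          ∏ j ∈ F.filter (¬ D ·), weightedLpNorm q k (h j) := by
        rw [sum_mul]
        refine sum_congr rfl fun b _ => ?_
        rw [← prod_filter_mul_prod_filter_not F D, prod_congr rfl fun j hj => hnorm j hj b]
        ring
    _ ≤ (∏ j ∈ F.filter D, weightedLpNorm q k (h j)) *
          ∏ j ∈ F.filter (¬ D ·), weightedLpNorm q k (h j) := by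
        gcongr
        · exact prod_nonneg fun j hj => weightedLpNorm_nonneg hq0 (hh j (mem_filter.mp hj).1)
        · exact sum_mul_prod_le_prod_weightedLpNorm hk hq0 hq1 hD fun j hj =>
            hh j (mem_filter.mp hj).1
    _ = ∏ j ∈ F, weightedLpNorm q k (h j) := prod_filter_mul_prod_filter_not F D _

end Holder

lemma sum_prod_eq_one {s : ℕ} {α : Fin s → Type*} [∀ i, Fintype (α i)] {p : ∀ i, α i → ℝ}
    (hp1 : ∀ i, ∑ a, p i a = 1) : ∑ ω : ∀ i, α i, ∏ i, p i (ω i) = 1 := by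
  rw [← Fintype.prod_sum, prod_congr rfl fun i _ => hp1 i, prod_const_one]

lemma sum_prod_mul_eq_sum_cons {s : ℕ} {α : Fin (s + 1) → Type*} [∀ i, Fintype (α i)]
    (p : ∀ i, α i → ℝ) (G : (∀ i, α i) → ℝ) :
    ∑ ω, (∏ i, p i (ω i)) * G ω =
      ∑ ω : ∀ i : Fin s, α i.succ, (∏ i, p i.succ (ω i)) * ∑ a, p 0 a * G (Fin.cons a ω) := by
  rw [← (Fin.consEquiv α).sum_comp, Fintype.sum_prod_type, sum_comm]
  refine sum_congr rfl fun ω _ => ?_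
  rw [mul_sum]
  refine sum_congr rfl fun a _ => ?_
  simp only [Fin.consEquiv, Equiv.coe_fn_mk, Fin.prod_univ_succ, Fin.cons_zero, Fin.cons_succ]
  ring

lemma weightedLpNorm_weightedLpNorm_cons {s k : ℕ} {α : Fin (s + 1) → Type*}
    [∀ i, Fintype (α i)] (hk : k ≠ 0) {p : ∀ i, α i → ℝ} (hp0 : ∀ a, 0 ≤ p 0 a)
    {f : (∀ i, α i) → ℝ} (hf : ∀ ω, 0 ≤ f ω) :
    weightedLpNorm (fun ω : ∀ i : Fin s, α i.succ => ∏ i, p i.succ (ω i)) k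
        (fun ω => weightedLpNorm (p 0) k fun a => f (Fin.cons a ω)) =
      weightedLpNorm (fun ω => ∏ i, p i (ω i)) k f := by
  simp only [weightedLpNorm]
  rw [sum_prod_mul_eq_sum_cons p fun ω => f ω ^ k]
  congr 1
  refine sum_congr rfl fun ω _ => ?_
  rw [rpow_inv_natCast_pow (sum_nonneg fun a _ => mul_nonneg (hp0 a) (pow_nonneg (hf _) k)) hk]

theorem finner_sum_prod_le_prod_weightedLpNorm {ι : Type*} [Fintype ι] {k : ℕ} (hk : k ≠ 0)
    {s : ℕ} {α : Fin s → Type*} [∀ i, Fintype (α i)] {p : ∀ i, α i → ℝ}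
    (hp0 : ∀ i a, 0 ≤ p i a) (hp1 : ∀ i, ∑ a, p i a = 1)
    {f : ι → (∀ i, α i) → ℝ} (hf0 : ∀ j ω, 0 ≤ f j ω) (S : ι → Finset (Fin s))
    (hdep : ∀ j ω ω', (∀ i ∈ S j, ω i = ω' i) → f j ω = f j ω')
    (hcard : ∀ i, #{j | i ∈ S j} ≤ k) :
    ∑ ω, (∏ i, p i (ω i)) * ∏ j, f j ω ≤
      ∏ j, weightedLpNorm (fun ω => ∏ i, p i (ω i)) k (f j) := by
  induction s generalizing ι with
  | zero =>
    have hP1 : ∑ ω : ∀ i : Fin 0, α i, ∏ i, p i (ω i) = 1 := sum_prod_eq_one hp1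
    rw [Fintype.sum_unique, Fin.prod_univ_zero, one_mul]
    exact (prod_congr rfl fun j _ => weightedLpNorm_const hk hP1 (hf0 j default)
      fun ω => by rw [Unique.eq_default ω]).ge
  | succ s ih =>
    set g : ι → (∀ i : Fin s, α i.succ) → ℝ :=
      fun j ω => weightedLpNorm (p 0) k fun a => f j (Fin.cons a ω)
    have hg0 : ∀ j ω, 0 ≤ g j ω := fun j ω => weightedLpNorm_nonneg (hp0 0) fun a => hf0 j _
    have hgdep : ∀ j ω ω', (∀ i ∈ ({i | i.succ ∈ S j} : Finset (Fin s)), ω i = ω' i) →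
        g j ω = g j ω' := by
      intro j ω ω' hagree
      simp only [g]
      congr 1
      funext a
      refine hdep j _ _ fun i hi => ?_
      cases i using Fin.cases with
      | zero => rfl
      | succ i => simpa using hagree i (by simpa using hi)
    calc ∑ ω, (∏ i, p i (ω i)) * ∏ j, f j ω
        = ∑ ω : ∀ i : Fin s, α i.succ, (∏ i, p i.succ (ω i)) *
            ∑ a, p 0 a * ∏ j, f j (Fin.cons a ω) := sum_prod_mul_eq_sum_cons p _
      _ ≤ ∑ ω : ∀ i : Fin s, α i.succ, (∏ i, p i.succ (ω i)) * ∏ j, g j ω := by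
        gcongr with ω
        · exact prod_nonneg fun i _ => hp0 _ _
        · refine sum_mul_prod_le_prod_weightedLpNorm_of_const_outside hk (hp0 0) (hp1 0) univ
            (fun j => 0 ∈ S j) (hcard 0) (fun j _ a => hf0 j _) fun j _ hj a a' => ?_
          refine hdep j _ _ fun i hi => ?_
          cases i using Fin.cases with
          | zero => exact absurd hi hj
          | succ i => simp
      _ ≤ ∏ j, weightedLpNorm (fun ω => ∏ i, p i.succ (ω i)) k (g j) :=
        ih (fun i => hp0 i.succ) (fun i => hp1 i.succ) hg0 (fun j => {i | i.succ ∈ S j}) hgdep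
          fun i => by simpa using hcard i.succ
      _ = ∏ j, weightedLpNorm (fun ω => ∏ i, p i (ω i)) k (f j) :=
        prod_congr rfl fun j _ => weightedLpNorm_weightedLpNorm_cons hk (hp0 0) (hf0 j)

section FiniteProbability

variable {Ω : Type*} [Fintype Ω] {P X : Ω → ℝ}

theorem sum_filter_lt_lt_exp_neg_mul_mul_sum (hP0 : ∀ ω, 0 ≤ P ω) {a β : ℝ} (hβ : 0 ≤ β)
    {ω₀ : Ω} (hPω₀ : 0 < P ω₀) (hXω₀ : X ω₀ ≤ a) :
    ∑ ω ∈ univ.filter fun ω => a < X ω, P ω <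
      exp (-(β * a)) * ∑ ω, P ω * exp (β * X ω) := by
  have htail : exp (β * a) * ∑ ω ∈ univ.filter fun ω => a < X ω, P ω ≤
      ∑ ω ∈ univ.filter fun ω => a < X ω, P ω * exp (β * X ω) := by
    rw [mul_sum]
    refine sum_le_sum fun ω hω => ?_
    rw [mul_comm]
    gcongr
    · exact hP0 ω
    · exact (mem_filter.mp hω).2.le
  have hrest : 0 < ∑ ω ∈ univ.filter fun ω => ¬ a < X ω, P ω * exp (β * X ω) :=
    sum_pos' (fun ω _ => mul_nonneg (hP0 ω) (exp_pos _).le)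
      ⟨ω₀, by simpa using hXω₀, mul_pos hPω₀ (exp_pos _)⟩
  rw [← sum_filter_add_sum_filter_not univ (fun ω => a < X ω), exp_neg, ← div_eq_inv_mul,
    lt_div_iff₀ (exp_pos _)]
  linarith

lemma exists_pos_and_le_of_sum_mul_le (hP0 : ∀ ω, 0 ≤ P ω) (hP1 : ∑ ω, P ω = 1) {a : ℝ}
    (hmean : ∑ ω, P ω * X ω ≤ a) : ∃ ω, 0 < P ω ∧ X ω ≤ a := by
  by_contra! hgt
  obtain ⟨ω₁, -, hPω₁⟩ : ∃ ω ∈ univ, (0 : ℝ) < P ω :=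
    exists_lt_of_sum_lt (by rw [sum_const_zero, hP1]; exact one_pos)
  have : ∑ ω, P ω * a < ∑ ω, P ω * X ω := by
    refine sum_lt_sum (fun ω _ => ?_) ⟨ω₁, mem_univ _, by gcongr; exact hgt ω₁ hPω₁⟩
    rcases (hP0 ω).eq_or_lt with hP | hP
    · rw [← hP, zero_mul, zero_mul]
    · exact mul_le_mul_of_nonneg_left (hgt ω hP).le hP.le
  rw [← sum_mul, hP1, one_mul] at this
  linarith

theorem pos_and_lt_one_of_tail_pos (hP0 : ∀ ω, 0 ≤ P ω) {t ρ lam : ℝ}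
    (hX0 : ∀ ω, 0 ≤ X ω) (hXt : ∀ ω, X ω ≤ t) (hmean : ∑ ω, P ω * X ω ≤ t * ρ)
    (hρlam : ρ ≤ lam) (htail : 0 < ∑ ω ∈ univ.filter fun ω => lam * t < X ω, P ω) :
    0 < ρ ∧ lam < 1 := by
  obtain ⟨ω₁, hω₁, hPω₁⟩ : ∃ ω ∈ univ.filter fun ω => lam * t < X ω, (0 : ℝ) < P ω :=
    exists_lt_of_sum_lt (by rwa [sum_const_zero])
  have hXω₁ : lam * t < X ω₁ := (mem_filter.mp hω₁).2
  have hsingle : P ω₁ * X ω₁ ≤ ∑ ω, P ω * X ω :=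
    single_le_sum (fun ω _ => mul_nonneg (hP0 ω) (hX0 ω)) (mem_univ ω₁)
  have ht : 0 < t := by nlinarith [hX0 ω₁, hXt ω₁]
  have hρ0 : 0 ≤ ρ := by nlinarith [mul_nonneg hPω₁.le (hX0 ω₁)]
  have hXpos : 0 < X ω₁ := (mul_nonneg (hρ0.trans hρlam) ht.le).trans_lt hXω₁
  constructor
  · nlinarith [mul_pos hPω₁ hXpos]
  · nlinarith [hXt ω₁]

lemma weightedLpNorm_exp_mul_of_zero_or_one (hP1 : ∑ ω, P ω = 1) {k : ℕ} (hk : k ≠ 0)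
    (θ : ℝ) {ζ : Ω → ℝ} (hζ : ∀ ω, ζ ω = 0 ∨ ζ ω = 1) :
    weightedLpNorm P k (fun ω => exp (θ / k * ζ ω)) =
      (1 + (exp θ - 1) * ∑ ω, P ω * ζ ω) ^ ((k : ℝ)⁻¹) := by
  have hpow : ∀ ω, exp (θ / k * ζ ω) ^ k = 1 + (exp θ - 1) * ζ ω := by
    intro ω
    rw [← exp_nat_mul]
    rcases hζ ω with h | h <;> simp [h]
    field_simp
  simp only [weightedLpNorm, hpow, mul_add, sum_add_distrib, mul_one, hP1, mul_sum]
  congr 2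
  exact sum_congr rfl fun ω _ => by ring

end FiniteProbability

theorem prod_le_pow_card_of_sum_le {ι : Type*} (s : Finset ι) {r : ι → ℝ}
    (hr : ∀ j ∈ s, 0 ≤ r j) {R : ℝ} (hsum : ∑ j ∈ s, r j ≤ #s * R) :
    ∏ j ∈ s, r j ≤ R ^ #s := by
  rcases s.eq_empty_or_nonempty with rfl | hs
  · simp
  have hn : (0 : ℝ) < #s := by exact_mod_cast hs.card_pos
  have amgm := geom_mean_le_arith_mean_weighted s (fun _ => (#s : ℝ)⁻¹) r
    (fun _ _ => by positivity) (by simp [hn.ne']) hr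
  rw [← mul_sum] at amgm
  have hgeom : ∏ j ∈ s, r j ^ (#s : ℝ)⁻¹ ≤ R :=
    amgm.trans (by rw [inv_mul_le_iff₀ hn]; exact hsum)
  calc ∏ j ∈ s, r j = (∏ j ∈ s, r j ^ (#s : ℝ)⁻¹) ^ #s := by
        rw [← prod_pow]
        exact prod_congr rfl fun j hj => (rpow_inv_natCast_pow (hr j hj) hs.card_pos.ne').symm
    _ ≤ R ^ #s := pow_le_pow_left₀ (prod_nonneg fun j hj => rpow_nonneg (hr j hj) _) hgeom _

theorem prod_one_add_mul_le_pow {t : ℕ} {μ : Fin t → ℝ} (hμ : ∀ j, 0 ≤ μ j) {b ρ : ℝ}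
    (hb : 0 ≤ b) (hsum : ∑ j, μ j ≤ t * ρ) :
    ∏ j, (1 + b * μ j) ≤ (1 + b * ρ) ^ t := by
  have hsum' : ∑ j, (1 + b * μ j) ≤ #(univ : Finset (Fin t)) * (1 + b * ρ) := by
    rw [sum_add_distrib, ← mul_sum, sum_const, card_univ, Fintype.card_fin, nsmul_one]
    nlinarith
  simpa using prod_le_pow_card_of_sum_le univ (fun j _ => by nlinarith [hμ j]) hsum'

theorem sum_prod_mul_exp_le_of_read_le {s t k : ℕ} {α : Fin s → Type*} [∀ i, Fintype (α i)]
    {p : ∀ i, α i → ℝ} (hp0 : ∀ i a, 0 ≤ p i a) (hp1 : ∀ i, ∑ a, p i a = 1)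
    {ζ : Fin t → (∀ i, α i) → ℝ} (hval : ∀ j ω, ζ j ω = 0 ∨ ζ j ω = 1)
    (S : Fin t → Finset (Fin s))
    (hread : ∀ j ω ω', (∀ i ∈ S j, ω i = ω' i) → ζ j ω = ζ j ω')
    (hcard : ∀ i, #{j | i ∈ S j} ≤ k) (hk : k ≠ 0) {θ ρ : ℝ} (hθ : 0 ≤ θ)
    (hmean : ∑ j, ∑ ω, (∏ i, p i (ω i)) * ζ j ω ≤ t * ρ) :
    ∑ ω, (∏ i, p i (ω i)) * exp (θ / k * ∑ j, ζ j ω) ≤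
      ((1 + (exp θ - 1) * ρ) ^ t) ^ ((k : ℝ)⁻¹) := by
  set P : (∀ i, α i) → ℝ := fun ω => ∏ i, p i (ω i)
  have hb : 0 ≤ exp θ - 1 := sub_nonneg.mpr (one_le_exp hθ)
  have hμ : ∀ j, 0 ≤ ∑ ω, P ω * ζ j ω := fun j => sum_nonneg fun ω _ =>
    mul_nonneg (prod_nonneg fun i _ => hp0 i _) (by rcases hval j ω with h | h <;> simp [h])
  have hmoment : ∀ j, 0 ≤ 1 + (exp θ - 1) * ∑ ω, P ω * ζ j ω := fun j =>
    add_nonneg zero_le_one (mul_nonneg hb (hμ j))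
  calc ∑ ω, P ω * exp (θ / k * ∑ j, ζ j ω) = ∑ ω, P ω * ∏ j, exp (θ / k * ζ j ω) := by
        simp only [mul_sum, exp_sum]
    _ ≤ ∏ j, weightedLpNorm P k fun ω => exp (θ / k * ζ j ω) :=
        finner_sum_prod_le_prod_weightedLpNorm hk hp0 hp1 (fun j ω => (exp_pos _).le) S
          (fun j ω ω' h => by rw [hread j ω ω' h]) hcard
    _ = (∏ j, (1 + (exp θ - 1) * ∑ ω, P ω * ζ j ω)) ^ ((k : ℝ)⁻¹) := by
        rw [← finsetProd_rpow _ _ fun j _ => hmoment j]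
        exact prod_congr rfl fun j _ =>
          weightedLpNorm_exp_mul_of_zero_or_one (sum_prod_eq_one hp1) hk θ (hval j)
    _ ≤ ((1 + (exp θ - 1) * ρ) ^ t) ^ ((k : ℝ)⁻¹) := by
        gcongr
        · exact prod_nonneg fun j _ => hmoment j
        · exact prod_one_add_mul_le_pow hμ hb hmean

noncomputable def bernoulliKL (lam ρ : ℝ) : ℝ :=
  lam * log (lam / ρ) + (1 - lam) * log ((1 - lam) / (1 - ρ))

/-- `θ` is the optimal tilt in the Chernoff bound: `bernoulliKL lam ρ` is the Legendre transform
at `lam` of the log-moment generating function `θ ↦ log (1 + (exp θ - 1) * ρ)`. -/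
theorem bernoulliKL_eq_mul_sub_log {ρ lam θ : ℝ} (hρ : 0 < ρ) (hρlam : ρ ≤ lam) (hlam : lam < 1)
    (hθ : θ = log (lam / ρ) - log ((1 - lam) / (1 - ρ))) :
    bernoulliKL lam ρ = θ * lam - log (1 + (exp θ - 1) * ρ) := by
  have hlam0 : 0 < lam := hρ.trans_le hρlam
  have h1lam : 0 < 1 - lam := by linarith
  have h1ρ : 0 < 1 - ρ := by linarith
  have hexp : exp θ = lam / ρ / ((1 - lam) / (1 - ρ)) := by
    rw [hθ, exp_sub, exp_log (by positivity), exp_log (by positivity)]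
  have hmgf : 1 + (exp θ - 1) * ρ = ((1 - lam) / (1 - ρ))⁻¹ := by
    rw [hexp]
    field_simp
    ring
  rw [hmgf, log_inv, bernoulliKL, hθ]
  ring

theorem stmt_12_general {s t k : ℕ} {α : Fin s → Type*} [∀ i, Fintype (α i)]
    (p : ∀ i, α i → ℝ) (hp0 : ∀ i a, 0 ≤ p i a) (hp1 : ∀ i, ∑ a, p i a = 1)
    (ζ : Fin t → (∀ i, α i) → ℝ) (hval : ∀ j ω, ζ j ω = 0 ∨ ζ j ω = 1)
    (Sj : Fin t → Finset (Fin s))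
    (hread : ∀ j : Fin t, ∀ ω ω' : ∀ i, α i, (∀ i ∈ Sj j, ω i = ω' i) → ζ j ω = ζ j ω')
    (hk : ∀ i : Fin s, (Finset.univ.filter (fun j : Fin t => i ∈ Sj j)).card ≤ k)
    (hkpos : 0 < k)
    (ρ lam : ℝ) (hρlam : ρ ≤ lam)
    (hmean : ∑ j : Fin t, ∑ ω : ∀ i, α i, (∏ i, p i (ω i)) * ζ j ω ≤ (t : ℝ) * ρ) :
    ∑ ω ∈ Finset.univ.filter (fun ω : ∀ i, α i => lam * t < ∑ j, ζ j ω), ∏ i, p i (ω i) <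
      Real.exp (-(lam * Real.log (lam / ρ) +
          (1 - lam) * Real.log ((1 - lam) / (1 - ρ))) * t / k) := by
  set P : (∀ i, α i) → ℝ := fun ω => ∏ i, p i (ω i)
  have hP0 : ∀ ω, 0 ≤ P ω := fun ω => prod_nonneg fun i _ => hp0 i _
  have hζ : ∀ j ω, 0 ≤ ζ j ω ∧ ζ j ω ≤ 1 := fun j ω => by rcases hval j ω with h | h <;> simp [h]
  have hmeanX : ∑ ω, P ω * ∑ j, ζ j ω ≤ t * ρ := by
    simp only [mul_sum]
    rwa [sum_comm]
  rcases (sum_nonneg fun ω _ => hP0 ω :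
    0 ≤ ∑ ω ∈ univ.filter fun ω => lam * t < ∑ j, ζ j ω, P ω).eq_or_lt with hL | hL
  · exact hL ▸ exp_pos _
  obtain ⟨hρ, hlam1⟩ := pos_and_lt_one_of_tail_pos hP0 (fun ω => sum_nonneg fun j _ => (hζ j ω).1)
    (fun ω => (sum_le_card_nsmul _ _ 1 fun j _ => (hζ j ω).2).trans_eq (by simp)) hmeanX hρlam hL
  obtain ⟨ω₀, hPω₀, hXω₀⟩ := exists_pos_and_le_of_sum_mul_le (a := lam * t) hP0
    (sum_prod_eq_one hp1) (hmeanX.trans (by nlinarith [(t.cast_nonneg : (0 : ℝ) ≤ t)]))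
  set θ := log (lam / ρ) - log ((1 - lam) / (1 - ρ)) with hθ
  have hθ0 : 0 ≤ θ := sub_nonneg_of_le <| (log_nonpos (by bound) (by bound)).trans
    (log_nonneg ((one_le_div hρ).mpr hρlam))
  calc _ < exp (-(θ / k * (lam * t))) * ∑ ω, P ω * exp (θ / k * ∑ j, ζ j ω) :=
        sum_filter_lt_lt_exp_neg_mul_mul_sum hP0 (by positivity) hPω₀ hXω₀
    _ ≤ exp (-(θ / k * (lam * t))) * ((1 + (exp θ - 1) * ρ) ^ t) ^ ((k : ℝ)⁻¹) := by
        gcongr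
        exact sum_prod_mul_exp_le_of_read_le hp0 hp1 hval Sj hread hk hkpos.ne' hθ0 hmean
    _ = exp (-(θ * lam - log (1 + (exp θ - 1) * ρ)) * t / k) := by
        rw [rpow_def_of_pos (pow_pos (by nlinarith [one_le_exp hθ0]) t), log_pow, ← exp_add]
        ring_nf
    _ = _ := by rw [← bernoulliKL_eq_mul_sub_log hρ hρlam hlam1 hθ, bernoulliKL]

/-- Concentration for read-`k` families of `{0,1}`-valued random variables
(Theorem of Gavinsky–Lovett–Saks–Srinivasan). -/
theorem stmt_12 {s t k : ℕ} {α : Fin s → Type*} [∀ i, Fintype (α i)]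
    (p : ∀ i, α i → ℝ) (hp0 : ∀ i a, 0 ≤ p i a) (hp1 : ∀ i, ∑ a, p i a = 1)
    (ζ : Fin t → (∀ i, α i) → ℝ) (hval : ∀ j ω, ζ j ω = 0 ∨ ζ j ω = 1)
    (Sj : Fin t → Finset (Fin s))
    (hread : ∀ j : Fin t, ∀ ω ω' : ∀ i, α i, (∀ i ∈ Sj j, ω i = ω' i) → ζ j ω = ζ j ω')
    (hk : ∀ i : Fin s, (Finset.univ.filter (fun j : Fin t => i ∈ Sj j)).card ≤ k)
    (hkpos : 0 < k)
    (ρ lam : ℝ) (hρlam : ρ ≤ lam) (hlam : lam ≤ 1)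
    (hmean : ∑ j : Fin t, ∑ ω : ∀ i, α i, (∏ i, p i (ω i)) * ζ j ω ≤ (t : ℝ) * ρ) :
    ∑ ω ∈ Finset.univ.filter (fun ω : ∀ i, α i => lam * t < ∑ j, ζ j ω), ∏ i, p i (ω i) <
      Real.exp (-(lam * Real.log (lam / ρ) +
          (1 - lam) * Real.log ((1 - lam) / (1 - ρ))) * t / k) :=
  stmt_12_general p hp0 hp1 ζ hval Sj hread hk hkpos ρ lam hρlam hmean
end

section
/- Let $A_1,\dots,A_s$ be events in a finite probability space, $\Gamma$ a graph on $[s]$, and $x_1,\dots,x_s \in [0,1)$. Suppose that for every $i \in [s]$ and every $S \subseteq [s] \setminus (\{i\} \cup N_\Gamma(i))$ with $\mathbb{P}(\bigwedge_{j \in S}\overline{A_j}) > 0$, we have $\mathbb{P}(A_i \mid \bigwedge_{j \in S}\overline{A_j}) \le x_i \prod_{j \in N_\Gamma(i)} (1 - x_j)$. Then $\mathbb{P}(\bigwedge_{i=1}^s \overline{A_i}) \ge \prod_{i=1}^s (1 - x_i)$. -/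
open scoped Classical BigOperators

noncomputable def prEvent {Ω : Type*} [Fintype Ω] (w : Ω → ℝ) (E : Set Ω) : ℝ :=
  ∑ ω ∈ Finset.univ.filter (· ∈ E), w ω

lemma prEvent_nonneg {Ω : Type*} [Fintype Ω] {w : Ω → ℝ} (hw0 : ∀ ω, 0 ≤ w ω)
    (E : Set Ω) : 0 ≤ prEvent w E :=
  Finset.sum_nonneg fun ω _ => hw0 ω

lemma prEvent_mono {Ω : Type*} [Fintype Ω] {w : Ω → ℝ} (hw0 : ∀ ω, 0 ≤ w ω)
    {E F : Set Ω} (hEF : E ⊆ F) : prEvent w E ≤ prEvent w F := by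
  apply Finset.sum_le_sum_of_subset_of_nonneg
  · intro ω hω
    simp only [Finset.mem_filter] at *
    exact ⟨hω.1, hEF hω.2⟩
  · intro ω _ _; exact hw0 ω

lemma prEvent_split {Ω : Type*} [Fintype Ω] (w : Ω → ℝ) (E B : Set Ω) :
    prEvent w E = prEvent w (E ∩ B) + prEvent w (E \ B) := by
  unfold prEvent
  rw [← Finset.sum_filter_add_sum_filter_not (Finset.univ.filter (· ∈ E)) (· ∈ B)]
  congr 1 <;> (congr 1; rw [Finset.filter_filter]; simp [Set.mem_diff])

section Key

variable {Ω : Type*} [Fintype Ω] (w : Ω → ℝ) {s : ℕ} (A : Fin s → Set Ω)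

/-- The "avoiding" event for a finite set of indices. -/
def avoidE (S : Finset (Fin s)) : Set Ω := {ω | ∀ j ∈ S, ω ∉ A j}

lemma avoidE_empty : avoidE A (∅ : Finset (Fin s)) = Set.univ := by
  ext ω; simp [avoidE]

lemma avoidE_insert (i : Fin s) (S : Finset (Fin s)) :
    avoidE A (insert i S) = avoidE A S \ A i := by
  ext ω; simp [avoidE, Set.mem_diff]; tauto

lemma avoidE_mono {S T : Finset (Fin s)} (hST : S ⊆ T) : avoidE A T ⊆ avoidE A S :=
  fun ω hω j hj => hω j (hST hj)

lemma pr_avoid_insert (i : Fin s) (S : Finset (Fin s)) :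
    prEvent w (avoidE A (insert i S)) =
      prEvent w (avoidE A S) - prEvent w (A i ∩ avoidE A S) := by
  rw [avoidE_insert, prEvent_split w (avoidE A S) (A i), Set.inter_comm]
  ring

lemma lll_key (hw0 : ∀ ω, 0 ≤ w ω) (hw1 : ∑ ω, w ω = 1)
    (Γ : SimpleGraph (Fin s)) (x : Fin s → ℝ) (hx0 : ∀ i, 0 ≤ x i) (hx1 : ∀ i, x i < 1)
    (h : ∀ i : Fin s, ∀ S : Finset (Fin s),
      (∀ j ∈ S, j ≠ i ∧ ¬Γ.Adj i j) →
      0 < prEvent w {ω | ∀ j ∈ S, ω ∉ A j} →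
      prEvent w (A i ∩ {ω | ∀ j ∈ S, ω ∉ A j}) / prEvent w {ω | ∀ j ∈ S, ω ∉ A j} ≤
        x i * ∏ j ∈ Finset.univ.filter (fun j => Γ.Adj i j), (1 - x j)) :
    ∀ n : ℕ, ∀ S : Finset (Fin s), S.card = n →
      ((∏ j ∈ S, (1 - x j)) ≤ prEvent w (avoidE A S) ∧
        ∀ i ∉ S, prEvent w (A i ∩ avoidE A S) ≤ x i * prEvent w (avoidE A S)) := by
  intro n
  induction n using Nat.strong_induction_on with
  | _ n IH =>
  intro S hcard
  have ha : (∏ j ∈ S, (1 - x j)) ≤ prEvent w (avoidE A S) := by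
    rcases S.eq_empty_or_nonempty with rfl | ⟨i, hi⟩
    · rw [avoidE_empty, Finset.prod_empty]
      unfold prEvent
      rw [← hw1]
      apply le_of_eq
      congr 1
      simp
    · have hS : insert i (S.erase i) = S := Finset.insert_erase hi
      have hnpos : 0 < n := hcard ▸ Finset.card_pos.mpr ⟨i, hi⟩
      have hc : (S.erase i).card = n - 1 := by
        rw [Finset.card_erase_of_mem hi, hcard]
      obtain ⟨ha', hb'⟩ := IH (n - 1) (by omega) (S.erase i) hc
      have hbi := hb' i (Finset.notMem_erase i S)
      have h1x : (0:ℝ) ≤ 1 - x i := by linarith [hx1 i]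
      have hprod : ∏ j ∈ S, (1 - x j) = (1 - x i) * ∏ j ∈ S.erase i, (1 - x j) :=
        (Finset.mul_prod_erase S _ hi).symm
      have hmul : (1 - x i) * ∏ j ∈ S.erase i, (1 - x j)
          ≤ (1 - x i) * prEvent w (avoidE A (S.erase i)) :=
        mul_le_mul_of_nonneg_left ha' h1x
      have hlast : (1 - x i) * prEvent w (avoidE A (S.erase i))
          ≤ prEvent w (avoidE A S) := by
        have hrec := pr_avoid_insert w A i (S.erase i)
        rw [hS] at hrec
        nlinarith [hbi]
      linarith [hprod ▸ le_trans hmul hlast]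
  refine ⟨ha, ?_⟩
  intro i hiS
  set S₁ := S.filter (fun j => Γ.Adj i j) with hS₁def
  set S₂ := S.filter (fun j => ¬ Γ.Adj i j) with hS₂def
  have hunion : S₂ ∪ S₁ = S := by
    rw [hS₁def, hS₂def, Finset.union_comm, Finset.filter_union_filter_not_eq]
  have hsub₂ : S₂ ⊆ S := Finset.filter_subset _ _
  have hposS₂ : 0 < prEvent w (avoidE A S₂) := by
    have hcard₂ : S₂.card ≤ n := hcard ▸ Finset.card_le_card hsub₂
    have haS₂ : (∏ j ∈ S₂, (1 - x j)) ≤ prEvent w (avoidE A S₂) := by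
      rcases eq_or_lt_of_le hcard₂ with heq | hlt
      · have hSe : S₂ = S := Finset.eq_of_subset_of_card_le hsub₂ (by omega)
        rw [hSe]; exact ha
      · exact (IH _ hlt S₂ rfl).1
    have hprodpos : (0:ℝ) < ∏ j ∈ S₂, (1 - x j) :=
      Finset.prod_pos fun j _ => by linarith [hx1 j]
    linarith
  have hcond : ∀ j ∈ S₂, j ≠ i ∧ ¬Γ.Adj i j := by
    intro j hj
    rw [hS₂def, Finset.mem_filter] at hj
    exact ⟨fun hji => hiS (hji ▸ hj.1), hj.2⟩
  have hh : prEvent w (A i ∩ avoidE A S₂) / prEvent w (avoidE A S₂)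
      ≤ x i * ∏ j ∈ Finset.univ.filter (fun j => Γ.Adj i j), (1 - x j) :=
    h i S₂ hcond hposS₂
  rw [div_le_iff₀ hposS₂] at hh
  have hmain : prEvent w (A i ∩ avoidE A S₂)
      ≤ (x i * ∏ j ∈ Finset.univ.filter (fun j => Γ.Adj i j), (1 - x j))
        * prEvent w (avoidE A S₂) := hh
  have hchain : ∀ U : Finset (Fin s), U ⊆ S₁ →
      (∏ j ∈ U, (1 - x j)) * prEvent w (avoidE A S₂) ≤ prEvent w (avoidE A (S₂ ∪ U)) := by
    intro U
    induction U using Finset.induction_on with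
    | empty => intro _; simp
    | @insert j U hjU IHU =>
      intro hsub
      have hjS₁ : j ∈ S₁ := hsub (Finset.mem_insert_self j U)
      have hUsub : U ⊆ S₁ := fun a ha' => hsub (Finset.mem_insert_of_mem ha')
      have hjS : j ∈ S := (Finset.filter_subset _ _) hjS₁
      have hjAdj : Γ.Adj i j := (Finset.mem_filter.mp hjS₁).2
      have hjnot : j ∉ S₂ ∪ U := by
        rw [Finset.mem_union]
        rintro (hj2 | hjU')
        · exact (Finset.mem_filter.mp hj2).2 hjAdj
        · exact hjU hjU'
      have hTsub : S₂ ∪ U ⊆ S.erase j := by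
        intro a haT
        rw [Finset.mem_erase]
        refine ⟨fun hEq => hjnot (hEq ▸ haT), ?_⟩
        rcases Finset.mem_union.mp haT with h2 | hU
        · exact hsub₂ h2
        · exact (Finset.filter_subset _ _) (hUsub hU)
      have hcardT : (S₂ ∪ U).card < n := by
        have h1 : (S₂ ∪ U).card ≤ (S.erase j).card := Finset.card_le_card hTsub
        have h2 : (S.erase j).card = n - 1 := by
          rw [Finset.card_erase_of_mem hjS, hcard]
        have hnpos : 0 < n := hcard ▸ Finset.card_pos.mpr ⟨j, hjS⟩
        omega
      have hb := (IH _ hcardT (S₂ ∪ U) rfl).2 j hjnot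
      have hIH2 := IHU hUsub
      have hins : prEvent w (avoidE A (S₂ ∪ insert j U)) =
          prEvent w (avoidE A (S₂ ∪ U)) - prEvent w (A j ∩ avoidE A (S₂ ∪ U)) := by
        rw [Finset.union_insert, pr_avoid_insert]
      rw [hins, Finset.prod_insert hjU]
      have h1xj : (0:ℝ) ≤ 1 - x j := by linarith [hx1 j]
      have e1 : (1 - x j) * ((∏ j ∈ U, (1 - x j)) * prEvent w (avoidE A S₂))
          ≤ (1 - x j) * prEvent w (avoidE A (S₂ ∪ U)) :=
        mul_le_mul_of_nonneg_left hIH2 h1xj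
      nlinarith [hb]
  have hUchain := hchain S₁ (subset_refl _)
  rw [hunion] at hUchain
  have hNsub : S₁ ⊆ Finset.univ.filter (fun j => Γ.Adj i j) := by
    intro a ha'
    simp only [Finset.mem_filter, Finset.mem_univ, true_and]
    exact (Finset.mem_filter.mp ha').2
  have hprodle : (∏ j ∈ Finset.univ.filter (fun j => Γ.Adj i j), (1 - x j))
      ≤ ∏ j ∈ S₁, (1 - x j) := by
    rw [← Finset.prod_sdiff hNsub]
    have hle1 : (∏ j ∈ Finset.univ.filter (fun j => Γ.Adj i j) \ S₁, (1 - x j)) ≤ 1 :=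
      Finset.prod_le_one (fun j _ => by linarith [hx1 j]) (fun j _ => by linarith [hx0 j])
    have hge0 : (0:ℝ) ≤ ∏ j ∈ S₁, (1 - x j) :=
      Finset.prod_nonneg fun j _ => by linarith [hx1 j]
    nlinarith
  have hm2 : prEvent w (A i ∩ avoidE A S) ≤ prEvent w (A i ∩ avoidE A S₂) :=
    prEvent_mono hw0 (Set.inter_subset_inter_right _ (avoidE_mono A hsub₂))
  have hPS₂pos : (0:ℝ) ≤ prEvent w (avoidE A S₂) := le_of_lt hposS₂
  calc prEvent w (A i ∩ avoidE A S) ≤ prEvent w (A i ∩ avoidE A S₂) := hm2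
    _ ≤ (x i * ∏ j ∈ Finset.univ.filter (fun j => Γ.Adj i j), (1 - x j))
          * prEvent w (avoidE A S₂) := hmain
    _ ≤ x i * ((∏ j ∈ S₁, (1 - x j)) * prEvent w (avoidE A S₂)) := by
        rw [mul_assoc]
        apply mul_le_mul_of_nonneg_left _ (hx0 i)
        exact mul_le_mul_of_nonneg_right hprodle hPS₂pos
    _ ≤ x i * prEvent w (avoidE A S) :=
        mul_le_mul_of_nonneg_left hUchain (hx0 i)

end Key

/-- The (lopsided) Lovász Local Lemma in conditional form. -/
theorem stmt_16 {Ω : Type*} [Fintype Ω] (w : Ω → ℝ) (hw0 : ∀ ω, 0 ≤ w ω)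
    (hw1 : ∑ ω, w ω = 1) (s : ℕ) (A : Fin s → Set Ω)
    (Γ : SimpleGraph (Fin s)) (x : Fin s → ℝ) (hx0 : ∀ i, 0 ≤ x i) (hx1 : ∀ i, x i < 1)
    (h : ∀ i : Fin s, ∀ S : Finset (Fin s),
      (∀ j ∈ S, j ≠ i ∧ ¬Γ.Adj i j) →
      0 < prEvent w {ω | ∀ j ∈ S, ω ∉ A j} →
      prEvent w (A i ∩ {ω | ∀ j ∈ S, ω ∉ A j}) / prEvent w {ω | ∀ j ∈ S, ω ∉ A j} ≤
        x i * ∏ j ∈ Finset.univ.filter (fun j => Γ.Adj i j), (1 - x j)) :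
    ∏ i, (1 - x i) ≤ prEvent w {ω | ∀ i, ω ∉ A i} := by
  have key := (lll_key w A hw0 hw1 Γ x hx0 hx1 h Finset.univ.card Finset.univ rfl).1
  have hEq : avoidE A (Finset.univ : Finset (Fin s)) = {ω | ∀ i, ω ∉ A i} := by
    ext ω; simp [avoidE]
  rwa [hEq] at key
end
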